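/- For ω > 0 and -2√ω < c < 2√ω, the soliton profile φ_{ω,c} of the derivative NLS satisfies ‖φ_{ω,c}‖²_{L²} = 8 arctan(√((2√ω+c)/(2√ω-c))). -/

import Mathlib

/-!
With `κ = √(4ω - c²)` one has `ϕ² = κ² / (√ω cosh (κx) - c/2)`, so after rescaling `x` the claim
reduces to `∫ dt / (a cosh t - b) = 4 / √(a² - b²) · arctan √((a + b)/(a - b))` for `|b| < a`.
An antiderivative is `2 / √(a² - b²) · arctan (m tanh (t/2))` with `m = √((a + b)/(a - b))`,
written through `tanh (t/2) = 1 - 2/(eᵗ + 1)`; it tends to `± arctan m` at `±∞`. Integrability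
of the integrand is automatic, since it is the nonnegative derivative of a function with
finite limits at `±∞`.
-/

/-- The real soliton profile `ϕ_{ω,c}` of the derivative NLS. -/
noncomputable def varphi (ω c x : ℝ) : ℝ :=
  (Real.sqrt ω / (4 * ω - c ^ 2)
      * (Real.cosh (x * Real.sqrt (4 * ω - c ^ 2)) - c / (2 * Real.sqrt ω)))
    ^ (-(1 / 2 : ℝ))

open Real MeasureTheory Set Filter Topology

theorem integrable_of_hasDerivAt_of_nonneg {g g' : ℝ → ℝ} {l l' : ℝ}
    (hderiv : ∀ x, HasDerivAt g (g' x) x) (hg' : ∀ x, 0 ≤ g' x)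
    (hbot : Tendsto g atBot (𝓝 l)) (htop : Tendsto g atTop (𝓝 l')) : Integrable g' := by
  have hIoi : IntegrableOn g' (Ioi 0) :=
    integrableOn_Ioi_deriv_of_nonneg' (fun x _ ↦ hderiv x) (fun x _ ↦ hg' x) htop
  have hIio : IntegrableOn g' (Iio 0) := by
    have hrefl : IntegrableOn (fun x ↦ g' (-x)) (Ioi (-0)) :=
      integrableOn_Ioi_deriv_of_nonneg' (g := fun x ↦ -g (-x))
        (fun x _ ↦ ((hderiv (-x)).comp x (hasDerivAt_neg x)).neg.congr_deriv (by ring))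
        (fun x _ ↦ hg' (-x)) (hbot.comp tendsto_neg_atTop_atBot).neg
    simpa using hrefl.comp_neg_Iio
  rw [← integrableOn_univ, ← Iio_union_Ici (a := (0 : ℝ)), integrableOn_union]
  exact ⟨hIio, (integrableOn_Ici_iff_integrableOn_Ioi).mpr hIoi⟩

theorem tendsto_one_sub_two_div_exp_add_one_atTop :
    Tendsto (fun t ↦ 1 - 2 / (exp t + 1)) atTop (𝓝 1) := by
  simpa using tendsto_const_nhds.sub
    (tendsto_const_nhds.div_atTop (tendsto_atTop_add_const_right _ 1 tendsto_exp_atTop))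

theorem tendsto_one_sub_two_div_exp_add_one_atBot :
    Tendsto (fun t ↦ 1 - 2 / (exp t + 1)) atBot (𝓝 (-1)) := by
  have h : Tendsto (fun t ↦ 1 - 2 / (exp t + 1)) atBot (𝓝 (1 - 2 / (0 + 1))) :=
    tendsto_const_nhds.sub (tendsto_const_nhds.div (tendsto_exp_atBot.add_const 1) (by norm_num))
  convert h using 2
  norm_num

theorem hasDerivAt_one_sub_two_div_exp_add_one (t : ℝ) :
    HasDerivAt (fun t ↦ 1 - 2 / (exp t + 1)) (2 * exp t / (exp t + 1) ^ 2) t := by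
  have h := ((hasDerivAt_const t 2).div ((hasDerivAt_exp t).add_const 1)
    (by positivity)).const_sub 1
  exact h.congr_deriv (by ring)

theorem sqrt_div_mul_self_eq_sqrt_sq_sub_sq {a b : ℝ} (hb : |b| < a) :
    √((a + b) / (a - b)) * (a - b) = √(a ^ 2 - b ^ 2) := by
  obtain ⟨hab, hba⟩ := abs_lt.mp hb
  have h : a ^ 2 - b ^ 2 = (a + b) / (a - b) * (a - b) ^ 2 := by
    field_simp [(sub_pos.mpr hba).ne']
    ring
  rw [h, sqrt_mul (div_nonneg (by linarith) (by linarith)), sqrt_sq (by linarith)]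

theorem hasDerivAt_arctan_mul_one_sub_two_div_exp_add_one {a b : ℝ} (hb : |b| < a) (t : ℝ) :
    HasDerivAt (fun t ↦ arctan (√((a + b) / (a - b)) * (1 - 2 / (exp t + 1))))
      (√(a ^ 2 - b ^ 2) / 2 * (a * cosh t - b)⁻¹) t := by
  obtain ⟨hab, hba⟩ := abs_lt.mp hb
  rw [← sqrt_div_mul_self_eq_sqrt_sq_sub_sq hb, cosh_eq, exp_neg]
  set m := √((a + b) / (a - b))
  have hm : m ^ 2 * (a - b) = a + b := by
    rw [sq_sqrt (div_nonneg (by linarith) (by linarith))]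
    field_simp [(sub_pos.mpr hba).ne']
  refine ((hasDerivAt_one_sub_two_div_exp_add_one t).const_mul m).arctan.congr_deriv ?_
  have hE := exp_pos t
  have hden : 0 < a * (exp t ^ 2 + 1) - 2 * exp t * b := by
    nlinarith [mul_pos (sub_pos.mpr hba) hE, sq_nonneg (exp t - 1)]
  field_simp
  linear_combination (-m * (exp t - 1) ^ 2) * hm

theorem integral_inv_mul_cosh_sub {a b : ℝ} (hb : |b| < a) :
    ∫ t, (a * cosh t - b)⁻¹ = 4 / √(a ^ 2 - b ^ 2) * arctan √((a + b) / (a - b)) := by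
  obtain ⟨hab, hba⟩ := abs_lt.mp hb
  set m := √((a + b) / (a - b))
  have hderiv := hasDerivAt_arctan_mul_one_sub_two_div_exp_add_one hb
  have hbot : Tendsto (fun t ↦ arctan (m * (1 - 2 / (exp t + 1)))) atBot (𝓝 (-arctan m)) := by
    simpa [Function.comp_def, ← arctan_neg] using
      (continuous_arctan.tendsto _).comp (tendsto_one_sub_two_div_exp_add_one_atBot.const_mul m)
  have htop : Tendsto (fun t ↦ arctan (m * (1 - 2 / (exp t + 1)))) atTop (𝓝 (arctan m)) := by
    simpa [Function.comp_def] using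
      (continuous_arctan.tendsto _).comp (tendsto_one_sub_two_div_exp_add_one_atTop.const_mul m)
  have hnonneg : ∀ t, 0 ≤ √(a ^ 2 - b ^ 2) / 2 * (a * cosh t - b)⁻¹ := fun t ↦ by
    have : 0 ≤ a * cosh t - b := by nlinarith [one_le_cosh t]
    positivity
  have hint := integral_of_hasDerivAt_of_tendsto hderiv
    (integrable_of_hasDerivAt_of_nonneg hderiv hnonneg hbot htop) hbot htop
  have hs : 0 < √(a ^ 2 - b ^ 2) := sqrt_pos.mpr (by nlinarith)
  rw [integral_const_mul] at hint
  rw [div_mul_eq_mul_div, eq_div_iff hs.ne']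
  linear_combination 2 * hint

theorem varphi_sq {ω c : ℝ} (hω : 0 < ω) (hc : c ^ 2 < 4 * ω) (x : ℝ) :
    varphi ω c x ^ 2 = (4 * ω - c ^ 2) * (√ω * cosh (x * √(4 * ω - c ^ 2)) - c / 2)⁻¹ := by
  have hs : 0 < √ω := sqrt_pos.mpr hω
  have hb : c / 2 < √ω := (abs_lt.mp (abs_lt_of_sq_lt_sq (by nlinarith [sq_sqrt hω.le]) hs.le)).2
  have hD : 0 < √ω * cosh (x * √(4 * ω - c ^ 2)) - c / 2 := by
    nlinarith [one_le_cosh (x * √(4 * ω - c ^ 2))]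
  have hX : √ω / (4 * ω - c ^ 2) * (cosh (x * √(4 * ω - c ^ 2)) - c / (2 * √ω))
      = (√ω * cosh (x * √(4 * ω - c ^ 2)) - c / 2) / (4 * ω - c ^ 2) := by
    field_simp
  rw [varphi, hX, ← rpow_natCast, ← rpow_mul (div_pos hD (by linarith)).le]
  norm_num [rpow_neg_one, div_eq_mul_inv]

/-- `‖φ_{ω,c}‖²_{L²} = ∫ ϕ_{ω,c}² = 8 arctan(√((2√ω+c)/(2√ω-c)))`. -/
theorem stmt9 (ω c : ℝ) (hω : 0 < ω)
    (hc1 : -2 * Real.sqrt ω < c) (hc2 : c < 2 * Real.sqrt ω) :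
    (∫ x, (varphi ω c x) ^ 2)
      = 8 * Real.arctan (Real.sqrt ((2 * Real.sqrt ω + c) / (2 * Real.sqrt ω - c))) := by
  have hs : √ω ^ 2 = ω := sq_sqrt hω.le
  have hc : c ^ 2 < 4 * ω := by nlinarith
  have hb : |c / 2| < √ω := abs_lt.mpr ⟨by linarith, by linarith⟩
  set κ := √(4 * ω - c ^ 2)
  have hκ : 0 < κ := sqrt_pos.mpr (by linarith)
  have hκ2 : κ ^ 2 = 4 * ω - c ^ 2 := sq_sqrt (by linarith)
  have hdisc : √(√ω ^ 2 - (c / 2) ^ 2) = κ / 2 := by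
    rw [hs, ← sqrt_sq (by positivity : 0 ≤ κ / 2), div_pow κ, hκ2]
    ring_nf
  have hratio : (√ω + c / 2) / (√ω - c / 2) = (2 * √ω + c) / (2 * √ω - c) := by
    rw [div_eq_div_iff (by linarith) (by linarith)]
    ring
  simp_rw [varphi_sq hω hc]
  rw [integral_const_mul, Measure.integral_comp_mul_right (fun t ↦ (√ω * cosh t - c / 2)⁻¹),
    integral_inv_mul_cosh_sub hb, hdisc, hratio, abs_of_pos (inv_pos.mpr hκ), smul_eq_mul,
    ← hκ2]
  field_simp
  ring
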